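/- arXiv:2405.10783 — 2 statements merged into one kernel-verified Lean document; each statement's English description precedes it below -/
import Mathlib

section
/- Let C be a semifree dg category with generating morphisms {f_i} indexed by an ordinal, such that d f_i lies in the subalgebra generated by {f_j : j < i}. For each i let u_i ∈ k be a unit and g_i a morphism generated by {f_j : j < i}, and set f̃_i := u_i f_i + g_i (when the sources and targets agree). Then the set {f̃_i} also freely generates the morphisms of C as an algebra, and d f̃_i lies in the subalgebra generated by {f̃_j : j < i}. -/
/-- Two algebra maps agreeing on a set agree on its adjoin. -/
theorem stmt7_eqOn_adjoin {k A B : Type*} [CommSemiring k] [Semiring A] [Semiring B]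
    [Algebra k A] [Algebra k B] (φ ψ : A →ₐ[k] B) (S : Set A)
    (h : ∀ x ∈ S, φ x = ψ x) : ∀ a ∈ Algebra.adjoin k S, φ a = ψ a := fun a ha => by
  induction ha using Algebra.adjoin_induction with
  | mem x hx => exact h x hx
  | algebraMap r => simp
  | add x y _ _ hx hy => simp [hx, hy]
  | mul x y _ _ hx hy => simp [hx, hy]

/-- The inverse images of the generators, by well-founded recursion. -/
noncomputable def stmt7_hval (k : Type) [CommRing k] (ι : Type) [LinearOrder ι]
    [WellFoundedLT ι] (u : ι → kˣ) (g : ι → FreeAlgebra k ι) : ι → FreeAlgebra k ι :=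
  fun i => WellFounded.fix wellFounded_lt
    (fun i rec => ((u i)⁻¹ : kˣ) • (FreeAlgebra.ι k i -
      (FreeAlgebra.lift k (fun j => if h : j < i then rec j h else 0)) (g i))) i

/-- basis change for semifree dg categories, algebra model.
Let the morphisms of a semifree dg category be modeled by the free algebra
`FreeAlgebra k ι` on generators `fᵢ = FreeAlgebra.ι k i` indexed by a well-ordered type
`ι`, equipped with a `k`-linear differential `d` satisfying the graded Leibniz rule
`d(ab) = (da)b + s(a)(db)` (where `s` is the sign automorphism, which preserves the
subalgebras generated by initial segments of generators), such that `d fᵢ` lies in the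
subalgebra generated by `{fⱼ : j < i}`.  Given units `uᵢ ∈ k` and elements `gᵢ` generated
by `{fⱼ : j < i}`, set `f̃ᵢ := uᵢ fᵢ + gᵢ`.  Then `{f̃ᵢ}` also freely generates the algebra
(there is an algebra automorphism sending `fᵢ` to `f̃ᵢ`), and `d f̃ᵢ` lies in the
subalgebra generated by `{f̃ⱼ : j < i}`. -/
theorem stmt7 (k : Type) [CommRing k] (ι : Type) [LinearOrder ι] [WellFoundedLT ι]
    (d : FreeAlgebra k ι →ₗ[k] FreeAlgebra k ι)
    (s : FreeAlgebra k ι →ₐ[k] FreeAlgebra k ι)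
    (hs : ∀ i : ι, ∀ a ∈ Algebra.adjoin k (FreeAlgebra.ι k '' {j | j < i}),
      s a ∈ Algebra.adjoin k (FreeAlgebra.ι k '' {j | j < i}))
    (hleib : ∀ a b : FreeAlgebra k ι, d (a * b) = d a * b + s a * d b)
    (hd : ∀ i : ι, d (FreeAlgebra.ι k i) ∈
      Algebra.adjoin k (FreeAlgebra.ι k '' {j | j < i}))
    (u : ι → kˣ) (g : ι → FreeAlgebra k ι)
    (hg : ∀ i : ι, g i ∈ Algebra.adjoin k (FreeAlgebra.ι k '' {j | j < i})) :
    (∃ e : FreeAlgebra k ι ≃ₐ[k] FreeAlgebra k ι,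
      ∀ i : ι, e (FreeAlgebra.ι k i) = (u i : k) • FreeAlgebra.ι k i + g i) ∧
    (∀ i : ι, d ((u i : k) • FreeAlgebra.ι k i + g i) ∈
      Algebra.adjoin k
        ((fun j => (u j : k) • FreeAlgebra.ι k j + g j) '' {j | j < i})) := by
  set f' : ι → FreeAlgebra k ι := fun j => (u j : k) • FreeAlgebra.ι k j + g j with hf'
  set F : FreeAlgebra k ι →ₐ[k] FreeAlgebra k ι := FreeAlgebra.lift k f' with hF
  set h : ι → FreeAlgebra k ι := stmt7_hval k ι u g with hh
  set G : FreeAlgebra k ι →ₐ[k] FreeAlgebra k ι := FreeAlgebra.lift k h with hG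
  have hFι : ∀ i, F (FreeAlgebra.ι k i) = f' i := fun i => FreeAlgebra.lift_ι_apply _ _
  have hGι : ∀ i, G (FreeAlgebra.ι k i) = h i := fun i => FreeAlgebra.lift_ι_apply _ _
  -- the recursion unfolding
  have hval_eq : ∀ i, h i = (((u i)⁻¹ : kˣ) : k) • (FreeAlgebra.ι k i - G (g i)) := by
    intro i
    rw [hh]
    show stmt7_hval k ι u g i = _
    unfold stmt7_hval
    rw [WellFounded.fix_eq]
    congr 2
    exact stmt7_eqOn_adjoin _ _ _ (by
      rintro x ⟨j, hj, rfl⟩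
      have hj' : j < i := hj
      rw [FreeAlgebra.lift_ι_apply, dif_pos hj', hGι]
      rfl) (g i) (hg i)
  -- G ∘ F = id on generators
  have hGF : ∀ i, G (F (FreeAlgebra.ι k i)) = FreeAlgebra.ι k i := by
    intro i
    rw [hFι]
    show G ((u i : k) • FreeAlgebra.ι k i + g i) = _
    rw [map_add, map_smul, hGι, hval_eq, smul_smul]
    simp [Units.mul_inv]
  -- F ∘ G = id on generators, by well-founded induction
  have hFG : ∀ i, F (G (FreeAlgebra.ι k i)) = FreeAlgebra.ι k i := by
    intro i
    induction i using WellFoundedLT.induction with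
    | ind i IH =>
      rw [hGι, hval_eq, map_smul, map_sub, hFι]
      have : F (G (g i)) = g i := by
        have := stmt7_eqOn_adjoin (F.comp G) (AlgHom.id k _) (FreeAlgebra.ι k '' {j | j < i})
          (by rintro x ⟨j, hj, rfl⟩; simpa using IH j hj) (g i) (hg i)
        simpa using this
      rw [this]
      show (((u i)⁻¹ : kˣ) : k) • ((u i : k) • FreeAlgebra.ι k i + g i - g i) = _
      rw [add_sub_cancel_right, smul_smul]
      simp [Units.inv_mul]
  refine ⟨⟨AlgEquiv.ofAlgHom F G ?h1 ?h2, fun i => hFι i⟩, ?part2⟩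
  case h1 => exact FreeAlgebra.hom_ext (funext fun i => by simpa using hFG i)
  case h2 => exact FreeAlgebra.hom_ext (funext fun i => by simpa using hGF i)
  -- part 2
  case part2 =>
    -- old adjoin ⊆ new adjoin
    have key : ∀ i : ι, ∀ a ∈ Algebra.adjoin k (FreeAlgebra.ι k '' {j | j < i}),
        a ∈ Algebra.adjoin k (f' '' {j | j < i}) := by
      intro i
      induction i using WellFoundedLT.induction with
      | ind i IH =>
        intro a ha
        refine Algebra.adjoin_le ?_ ha
        rintro x ⟨j, hj, rfl⟩
        have h1 : f' j ∈ Algebra.adjoin k (f' '' {j_1 | j_1 < i}) :=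
          Algebra.subset_adjoin ⟨j, hj, rfl⟩
        have h2 : g j ∈ Algebra.adjoin k (f' '' {j_1 | j_1 < i}) := by
          have := IH j hj (g j) (hg j)
          exact Algebra.adjoin_mono (Set.image_mono fun x hx => lt_trans hx hj) this
        have : FreeAlgebra.ι k j = (((u j)⁻¹ : kˣ) : k) • (f' j - g j) := by
          rw [hf']
          show _ = (((u j)⁻¹ : kˣ) : k) • ((u j : k) • FreeAlgebra.ι k j + g j - g j)
          rw [add_sub_cancel_right, smul_smul]
          simp [Units.inv_mul]
        rw [this]
        exact Subalgebra.smul_mem _ (sub_mem h1 h2) _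
    -- d(1) = 0
    have hd1 : d (1 : FreeAlgebra k ι) = 0 := by
      have h0 : d ((1 : FreeAlgebra k ι) * 1) = d 1 * 1 + s 1 * d 1 := hleib 1 1
      have hs1 : s 1 = 1 := map_one s
      rw [show (1 : FreeAlgebra k ι) * 1 = 1 from one_mul 1, mul_one, hs1, one_mul] at h0
      have h1 : d (1 : FreeAlgebra k ι) + 0 = d 1 + d 1 := by rw [add_zero]; exact h0
      exact (add_left_cancel h1).symm
    -- d preserves old adjoin
    have hdadj : ∀ i : ι, ∀ a ∈ Algebra.adjoin k (FreeAlgebra.ι k '' {j | j < i}),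
        d a ∈ Algebra.adjoin k (FreeAlgebra.ι k '' {j | j < i}) := by
      intro i a ha
      induction ha using Algebra.adjoin_induction with
      | mem x hx =>
        obtain ⟨j, hj, rfl⟩ := hx
        exact Algebra.adjoin_mono (Set.image_mono fun x hx => lt_trans hx hj) (hd j)
      | algebraMap r =>
        have : (algebraMap k (FreeAlgebra k ι)) r = r • 1 := Algebra.algebraMap_eq_smul_one r
        rw [this, map_smul, hd1, smul_zero]
        exact Subalgebra.zero_mem _
      | add x y hx hy ihx ihy => rw [map_add]; exact add_mem ihx ihy
      | mul x y hx hy ihx ihy =>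
        rw [hleib]
        exact add_mem (mul_mem ihx hy) (mul_mem (hs i x hx) ihy)
    intro i
    apply key i
    rw [map_add, map_smul]
    exact add_mem (Subalgebra.smul_mem _ (hd i) _) (hdadj i (g i) (hg i))
end

section
/- Fix n ≥ 3 and a finite graded quiver Q with grading q_e ∈ ℤ on each arrow e. The Ginzburg dg category G_n(Q) is the semifree dg category with objects V(Q), generators t_v : v → v of degree 1−n, e : v → w of degree q_e, e* : w → v of degree 2−n−q_e, with de = de* = 0 and dt_v = Σ_{e = v→•} e* e − Σ_{e = •→v} (−1)^{|e||e*|} e e*. Then G_n(Q) is isomorphic (as a dg category) to the category P^{S^n}_{n,η} with objects L_v, generators h_v of degree 1−n, x_e of degree d_e := q_e, y_e of degree 2−n−d_e, dx_e = dy_e = 0, and dh_v = Σ_{e=v→•} (−1)^{n d_e} y_e x_e + Σ_{e=•→v} (−1)^{n(n−1)/2} sgn(e) x_e y_e where sgn(e) := −(−1)^{q_e + n(n−1)/2}, under the relabeling v ↦ L_v, t_v ↦ h_v, e ↦ x_e, e* ↦ (−1)^{n q_e} y_e. -/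
/-- The generating morphisms of both the Ginzburg dg category `G_n(Q)` and the Fukaya
presentation `P^{Sⁿ}_{n,η}`: a generator `x e` (`e` resp. `x_e`), a generator `y e`
(`e*` resp. `y_e`), and a loop `h v` (`t_v` resp. `h_v`). -/
inductive PlumbLetter (V E : Type) : Type
  | x : E → PlumbLetter V E
  | y : E → PlumbLetter V E
  | h : V → PlumbLetter V E

/-- The sign `(−1)^{|e||e*|}` with `|e| = q_e` and `|e*| = 2 − n − q_e`. -/
def koszulSign (n : ℕ) (qe : ℤ) : ℤ := ((qe * (2 - (n : ℤ) - qe)).negOnePow : ℤ)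

/-- The sign function `sgn(e) := −(−1)^{q_e + n(n−1)/2}` on the arrows. -/
def plumbSgn (n : ℕ) (qe : ℤ) : ℤ := -(((qe + ((n * (n - 1) / 2 : ℕ) : ℤ)).negOnePow : ℤ))

/-- The Fukaya-side coefficient `(−1)^{n(n−1)/2} · sgn(e)`. -/
def fukCoeff (n : ℕ) (qe : ℤ) : ℤ :=
  ((((n * (n - 1) / 2 : ℕ) : ℤ).negOnePow : ℤ)) * plumbSgn n qe

/-- The rescaling coefficient `(−1)^{n q_e}` of the relabeling `e* ↦ (−1)^{n q_e} y_e`. -/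
def relabelCoeff (n : ℕ) (qe : ℤ) : ℤ := (((n : ℤ) * qe).negOnePow : ℤ)

open FreeAlgebra in
/-- The Ginzburg differential of the loop generator `t_v`:
`dt_v = Σ_{e = v→•} e* e − Σ_{e = •→v} (−1)^{|e||e*|} e e*`,
written in the free morphism algebra on the generators. -/
noncomputable def ginzburgDiff (k : Type) [CommRing k] {V E : Type}
    [Fintype E] [DecidableEq V] (s t : E → V) (n : ℕ) (q : E → ℤ) (v : V) :
    FreeAlgebra k (PlumbLetter V E) :=
  (∑ e ∈ Finset.univ.filter (fun e => s e = v),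
      ι k (PlumbLetter.y (V := V) e) * ι k (PlumbLetter.x (V := V) e))
  - ∑ e ∈ Finset.univ.filter (fun e => t e = v),
      koszulSign n (q e) •
        (ι k (PlumbLetter.x (V := V) e) * ι k (PlumbLetter.y (V := V) e))

open FreeAlgebra in
/-- The Fukaya differential of the loop generator `h_v`:
`dh_v = Σ_{e = v→•} (−1)^{n d_e} y_e x_e + Σ_{e = •→v} (−1)^{n(n−1)/2} sgn(e) x_e y_e`,
with `d_e := q_e` and `sgn(e) := −(−1)^{q_e + n(n−1)/2}`. -/
noncomputable def fukayaDiff (k : Type) [CommRing k] {V E : Type}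
    [Fintype E] [DecidableEq V] (s t : E → V) (n : ℕ) (q : E → ℤ) (v : V) :
    FreeAlgebra k (PlumbLetter V E) :=
  (∑ e ∈ Finset.univ.filter (fun e => s e = v),
      relabelCoeff n (q e) •
        (ι k (PlumbLetter.y (V := V) e) * ι k (PlumbLetter.x (V := V) e)))
  + ∑ e ∈ Finset.univ.filter (fun e => t e = v),
      fukCoeff n (q e) •
        (ι k (PlumbLetter.x (V := V) e) * ι k (PlumbLetter.y (V := V) e))

open FreeAlgebra in
/-- The relabeling `v ↦ L_v`, `t_v ↦ h_v`, `e ↦ x_e`, `e* ↦ (−1)^{n q_e} y_e`, as an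
algebra endomorphism of the free morphism algebra. -/
noncomputable def relabelMap (k : Type) [CommRing k] {V E : Type}
    (n : ℕ) (q : E → ℤ) :
    FreeAlgebra k (PlumbLetter V E) →ₐ[k] FreeAlgebra k (PlumbLetter V E) :=
  FreeAlgebra.lift k fun l =>
    match l with
    | PlumbLetter.x e => ι k (PlumbLetter.x (V := V) e)
    | PlumbLetter.y e => relabelCoeff n (q e) • ι k (PlumbLetter.y (V := V) e)
    | PlumbLetter.h v => ι k (PlumbLetter.h (E := E) v)


lemma relabelCoeff_mul_self (n : ℕ) (qe : ℤ) :
    relabelCoeff n qe * relabelCoeff n qe = 1 := by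
  rw [relabelCoeff, ← Units.val_mul, Int.units_mul_self, Units.val_one]

lemma koszul_mul_relabel (n : ℕ) (qe : ℤ) :
    koszulSign n qe * relabelCoeff n qe = - fukCoeff n qe := by
  rw [koszulSign, relabelCoeff, fukCoeff, plumbSgn]
  rw [← Units.val_mul, ← Int.negOnePow_add, mul_neg, ← Units.val_mul, ← Int.negOnePow_add,
    neg_neg]
  congr 1
  rw [Int.negOnePow_eq_iff]
  have h := Int.even_mul_succ_self (qe - 1)
  have : qe * (2 - (n : ℤ) - qe) + (n : ℤ) * qe -
      (((n * (n - 1) / 2 : ℕ) : ℤ) + (qe + ((n * (n - 1) / 2 : ℕ) : ℤ)))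
      = -((qe - 1) * (qe - 1 + 1)) + 2 * (-((n * (n - 1) / 2 : ℕ) : ℤ)) := by ring
  rw [this]
  exact (h.neg).add (even_two_mul _)

lemma relabelMap_invol (k : Type) [CommRing k] {V E : Type} (n : ℕ) (q : E → ℤ) :
    (relabelMap k (V := V) (E := E) n q).comp (relabelMap k (V := V) (E := E) n q) =
      AlgHom.id k _ := by
  apply FreeAlgebra.hom_ext
  funext l
  cases l with
  | x e => simp [relabelMap]
  | h v => simp [relabelMap]
  | y e =>
    simp only [Function.comp_apply, AlgHom.coe_comp, AlgHom.coe_id, id_eq,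
      relabelMap, FreeAlgebra.lift_ι_apply, map_zsmul, smul_smul,
      relabelCoeff_mul_self, one_smul]

/-- Fix `n ≥ 3` and a finite graded quiver `Q = (V, E, s, t)` with
grading `q_e`.  The relabeling `v ↦ L_v`, `t_v ↦ h_v`, `e ↦ x_e`, `e* ↦ (−1)^{n q_e} y_e`
defines an isomorphism of dg categories from the Ginzburg dg category `G_n(Q)` onto the
wrapped Fukaya presentation `P^{Sⁿ}_{n,η}` (with `d_e := q_e` and
`sgn(e) := −(−1)^{q_e + n(n−1)/2}`): the induced map on the free morphism algebra is
bijective (it is bijective on objects and generators, and degrees of the generators are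
preserved by construction), and it intertwines the differentials of the loop generators:
`Φ(dt_v) = dh_v` for every vertex `v`. -/
theorem stmt13 (k : Type) [CommRing k] {V E : Type} [Fintype V] [Fintype E]
    [DecidableEq V] (s t : E → V) (n : ℕ) (hn : 3 ≤ n) (q : E → ℤ) :
    Function.Bijective (relabelMap k (V := V) (E := E) n q) ∧
    ∀ v : V, relabelMap k (V := V) (E := E) n q (ginzburgDiff k s t n q v) =
      fukayaDiff k s t n q v := by
  constructor
  · have h := relabelMap_invol k (V := V) (E := E) n q
    refine Function.bijective_iff_has_inverse.2
      ⟨relabelMap k (V := V) (E := E) n q, fun a => ?_, fun a => ?_⟩ <;>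
    · rw [← AlgHom.comp_apply, h, AlgHom.id_apply]
  · intro v
    rw [ginzburgDiff, fukayaDiff, map_sub, map_sum, map_sum, sub_eq_add_neg]
    congr 1
    · refine Finset.sum_congr rfl fun e _ => ?_
      simp only [map_mul, relabelMap, FreeAlgebra.lift_ι_apply, smul_mul_assoc]
    · rw [neg_eq_iff_eq_neg, ← Finset.sum_neg_distrib]
      refine Finset.sum_congr rfl fun e _ => ?_
      simp only [map_zsmul, map_mul, relabelMap, FreeAlgebra.lift_ι_apply,
        mul_smul_comm, smul_smul, koszul_mul_relabel, neg_smul]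
end
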